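/- In the group Ξ = ⟨x, y | x³ = y² = 1⟩ ≅ ℤ/3 * ℤ/2, represented in PGL₂(𝔽_p(t)) (p ≥ 3) by x ↦ [(0,1;−1,−1)] and y ↦ [(0,1;t,0)], the resulting homomorphism ι : Ξ → PGL₂(𝔽_p(t)) is injective. -/

import Mathlib

open Matrix

/-- `PGL₂` of a field: the quotient of `GL₂` by its center. -/
abbrev PGL2 (K : Type*) [Field K] :=
  GL (Fin 2) K ⧸ Subgroup.center (GL (Fin 2) K)

/-- The matrix `(0,1;−1,−1)` as an element of `GL₂(𝔽_p(t))`. -/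
noncomputable def Xmat (p : ℕ) [Fact p.Prime] : GL (Fin 2) (RatFunc (ZMod p)) :=
  Matrix.nonsingInvUnit !![0, 1; -1, -1] (by
    simp [Matrix.det_fin_two_of])

/-- The matrix `(0,1;t,0)` as an element of `GL₂(𝔽_p(t))`. -/
noncomputable def Ymat (p : ℕ) [Fact p.Prime] : GL (Fin 2) (RatFunc (ZMod p)) :=
  Matrix.nonsingInvUnit !![0, 1; RatFunc.X, 0] (by
    simp [Matrix.det_fin_two_of, RatFunc.X_ne_zero])

/-- The relations of `Ξ = ⟨x, y | x³, y²⟩ ≅ ℤ/3 * ℤ/2`. -/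
def xiRels : Set (FreeGroup (Fin 2)) :=
  {FreeGroup.of 0 ^ 3, FreeGroup.of 1 ^ 2}

/-!
Let `v` be the valuation at infinity of `𝔽_p(t)`, so that `v t > 1`, and let `D ⊆ ℙ¹` be the disc
`v z < 1`. As Möbius maps, `x : z ↦ -1/(z+1)` sends `D` into the disc `v(z+1) < 1` and
`x² : z ↦ -(z+1)/z` sends it into `v z > 1` (or `∞`), both disjoint from `D`, while
`y : z ↦ 1/(tz)` maps both images back into `D`. The ping-pong lemma for `x • D ∪ x² • D`
and `D` makes `ℤ/3 * ℤ/2 → PGL₂` injective, and this map is the surjection `ℤ/3 * ℤ/2 → Ξ`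
followed by `ι`.
-/

open Function Pointwise
open scoped LinearAlgebra.Projectivization MatrixGroups

section ZModHom

variable {G : Type*} [Group G] {n : ℕ} [NeZero n]

def zmodHom (g : G) (hg : g ^ n = 1) : Multiplicative (ZMod n) →* G where
  toFun a := g ^ a.toAdd.val
  map_one' := by simp
  map_mul' a b := by
    rw [toAdd_mul, ZMod.val_add, ← pow_eq_pow_mod _ hg, pow_add]

@[simp] lemma zmodHom_apply (g : G) (hg : g ^ n = 1) (a : Multiplicative (ZMod n)) :
    zmodHom g hg a = g ^ a.toAdd.val := rfl

lemma zmodHom_ofAdd_one (g : G) (hg : g ^ n = 1) : zmodHom g hg (.ofAdd 1) = g := by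
  rw [zmodHom_apply, toAdd_ofAdd, ZMod.val_one_eq_one_mod, ← pow_eq_pow_mod _ hg, pow_one]

end ZModHom

namespace PresentedGroup

variable {ι : Type*} {rels : Set (FreeGroup ι)}

lemma of_pow_eq_one {i : ι} {m : ℕ} (h : FreeGroup.of i ^ m ∈ rels) :
    (of i : PresentedGroup rels) ^ m = 1 := by
  rw [← one_of_mem h, map_pow]
  rfl

lemma injective_of_injective_lift_zmodHom {G : Type*} [Group G] {n : ι → ℕ}
    [∀ i, NeZero (n i)] (hrels : ∀ i, FreeGroup.of i ^ n i ∈ rels)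
    (φ : PresentedGroup rels →* G) {g : ι → G} (hg : ∀ i, g i ^ n i = 1)
    (hφ : ∀ i, φ (of i) = g i)
    (hinj : Injective (Monoid.CoprodI.lift fun i => zmodHom (g i) (hg i))) :
    Injective φ := by
  set σ := Monoid.CoprodI.lift fun i =>
    zmodHom (of i : PresentedGroup rels) (of_pow_eq_one (hrels i))
  have hσ : Surjective σ := by
    rw [← MonoidHom.range_eq_top, eq_top_iff, ← closure_range_of rels, Subgroup.closure_le]
    rintro _ ⟨i, rfl⟩
    exact ⟨Monoid.CoprodI.of (.ofAdd 1), by rw [Monoid.CoprodI.lift_of, zmodHom_ofAdd_one]⟩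
  have hcomp : φ.comp σ = Monoid.CoprodI.lift fun i => zmodHom (g i) (hg i) :=
    Monoid.CoprodI.ext_hom _ _ fun i => MonoidHom.ext fun a => by simp [σ, hφ]
  refine Injective.of_comp_right ?_ hσ
  rwa [← MonoidHom.coe_comp, hcomp]

end PresentedGroup

lemma Monoid.CoprodI.lift_zmodHom_injective_of_ping_pong {ι G α : Type*} [Nontrivial ι]
    [Group G] [MulAction G α] {n : ι → ℕ} [∀ i, NeZero (n i)] {g : ι → G}
    (hg : ∀ i, g i ^ n i = 1) (X : ι → Set α) (hcard : 3 ≤ Cardinal.mk ι ∨ ∃ i, 3 ≤ n i)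
    (hX : ∀ i, (X i).Nonempty) (hdisj : Pairwise (Disjoint on X))
    (hpp : Pairwise fun i j => ∀ k, 0 < k → k < n i → g i ^ k • X j ⊆ X i) :
    Injective (lift fun i => zmodHom (g i) (hg i)) := by
  refine lift_injective_of_ping_pong _ ?_ X hX hdisj fun i j hij h h1 => ?_
  · simpa using hcard
  · refine hpp hij _ (ZMod.val_pos.2 fun h0 => h1 ?_) (ZMod.val_lt _)
    rw [← ofAdd_toAdd h, h0, ofAdd_zero]

section ProjectiveLine

variable {K : Type*} [Field K]

noncomputable instance : MulAction (PGL2 K) (ℙ K (Fin 2 → K)) :=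
  inferInstanceAs (MulAction PGL(Fin 2, K) (ℙ K (Fin 2 → K)))

lemma PGL2.mk_smul_mk (g : GL (Fin 2) K) {w : Fin 2 → K} (hw : w ≠ 0) :
    (QuotientGroup.mk g : PGL2 K) • Projectivization.mk K w hw =
      Projectivization.mk K (g • w) ((smul_ne_zero_iff_ne g).2 hw) := rfl

variable {Γ₀ : Type*} [LinearOrderedCommGroupWithZero Γ₀] (v : Valuation K Γ₀)

/-- In the affine coordinate `z = w 0 / w 1` of `[w 0 : w 1]`, the disc `{z | v z < 1}`. -/
def Valuation.openUnitDisc : Set (ℙ K (Fin 2 → K)) :=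
  {P | Projectivization.lift (fun w : {w : Fin 2 → K // w ≠ 0} => v (w.1 0) < v (w.1 1))
      (fun a b c hab => by
        have hc : v c ≠ 0 := by
          rw [Ne, v.zero_iff]
          rintro rfl
          exact a.2 (by rw [hab, zero_smul])
        simp only [hab, Pi.smul_apply, smul_eq_mul, map_mul]
        exact propext (mul_lt_mul_iff_right₀ (zero_lt_iff.2 hc))) P}

variable {v}

lemma Valuation.mk_mem_openUnitDisc {w : Fin 2 → K} (hw : w ≠ 0) :
    Projectivization.mk K w hw ∈ v.openUnitDisc ↔ v (w 0) < v (w 1) := Iff.rfl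

lemma Valuation.map_neg_add_neg_of_lt {u w : K} (h : v u < v w) : v (-u + -w) = v w := by
  rw [← neg_add, map_neg, v.map_add_eq_of_lt_right h]

variable {x : GL (Fin 2) K} (hx : ⇑x = !![0, 1; -1, -1])
include hx

lemma disjoint_smul_openUnitDisc :
    Disjoint ((QuotientGroup.mk x : PGL2 K) • v.openUnitDisc) v.openUnitDisc := by
  rw [Set.disjoint_left]
  rintro _ ⟨P, hP, rfl⟩
  induction P using Projectivization.ind with | h w hw =>
  rw [Valuation.mk_mem_openUnitDisc] at hP
  simp [PGL2.mk_smul_mk, Valuation.mk_mem_openUnitDisc, hx, v.map_neg_add_neg_of_lt hP]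

lemma disjoint_sq_smul_openUnitDisc :
    Disjoint ((QuotientGroup.mk x : PGL2 K) ^ 2 • v.openUnitDisc) v.openUnitDisc := by
  rw [Set.disjoint_left]
  rintro _ ⟨P, hP, rfl⟩
  induction P using Projectivization.ind with | h w hw =>
  rw [Valuation.mk_mem_openUnitDisc] at hP
  simpa [pow_two, mul_smul, PGL2.mk_smul_mk, Valuation.mk_mem_openUnitDisc, hx,
    v.map_neg_add_neg_of_lt hP] using hP.le

variable {t : K} (ht : 1 < v t) {y : GL (Fin 2) K} (hy : ⇑y = !![0, 1; t, 0])
include ht hy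

lemma smul_smul_openUnitDisc_subset :
    (QuotientGroup.mk y : PGL2 K) • (QuotientGroup.mk x : PGL2 K) • v.openUnitDisc ⊆
      v.openUnitDisc := by
  rintro _ ⟨_, ⟨P, hP, rfl⟩, rfl⟩
  induction P using Projectivization.ind with | h w hw =>
  rw [Valuation.mk_mem_openUnitDisc] at hP
  have hw1 : v (w 1) < v t * v (w 1) := (lt_mul_iff_one_lt_left (zero_le.trans_lt hP)).2 ht
  simpa [PGL2.mk_smul_mk, Valuation.mk_mem_openUnitDisc, hx, hy, v.map_neg_add_neg_of_lt hP]
    using hw1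

lemma smul_sq_smul_openUnitDisc_subset :
    (QuotientGroup.mk y : PGL2 K) • (QuotientGroup.mk x : PGL2 K) ^ 2 • v.openUnitDisc ⊆
      v.openUnitDisc := by
  rintro _ ⟨_, ⟨P, hP, rfl⟩, rfl⟩
  induction P using Projectivization.ind with | h w hw =>
  rw [Valuation.mk_mem_openUnitDisc] at hP
  have hw1 : v (w 1) < v t * v (w 1) := (lt_mul_iff_one_lt_left (zero_le.trans_lt hP)).2 ht
  simpa [pow_two, mul_smul, PGL2.mk_smul_mk, Valuation.mk_mem_openUnitDisc, hx, hy,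
    v.map_neg_add_neg_of_lt hP] using hP.trans hw1

end ProjectiveLine

section PingPong

variable {K : Type*} [Field K]

instance (i : Fin 2) : NeZero (![3, 2] i) := ⟨by fin_cases i <;> decide⟩

lemma mk_pow_three_eq_one {x : GL (Fin 2) K} (hx : ⇑x = !![0, 1; -1, -1]) :
    (QuotientGroup.mk x : PGL2 K) ^ 3 = 1 := by
  have hx3 : x ^ 3 = 1 := by
    ext i j
    fin_cases i <;> fin_cases j <;> simp [pow_succ, Matrix.mul_apply, Fin.sum_univ_two, hx]
  rw [← QuotientGroup.mk_pow, hx3, QuotientGroup.mk_one]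

lemma mk_sq_eq_one {t : K} (ht : t ≠ 0) {y : GL (Fin 2) K} (hy : ⇑y = !![0, 1; t, 0]) :
    (QuotientGroup.mk y : PGL2 K) ^ 2 = 1 := by
  rw [← QuotientGroup.mk_pow, QuotientGroup.eq_one_iff,
    GeneralLinearGroup.center_eq_range_scalar]
  refine ⟨Units.mk0 t ht, ?_⟩
  ext i j
  fin_cases i <;> fin_cases j <;> simp [pow_succ, Matrix.mul_apply, Fin.sum_univ_two, hy]

variable {Γ₀ : Type*} [LinearOrderedCommGroupWithZero Γ₀] {v : Valuation K Γ₀}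
  {t : K} (ht : 1 < v t) {x y : GL (Fin 2) K} (hx : ⇑x = !![0, 1; -1, -1])
  (hy : ⇑y = !![0, 1; t, 0])
include ht hx hy

lemma lift_zmodHom_injective_of_one_lt_valuation
    (hg : ∀ i, ![(QuotientGroup.mk x : PGL2 K), QuotientGroup.mk y] i ^ ![3, 2] i = 1) :
    Injective (Monoid.CoprodI.lift fun i => zmodHom _ (hg i)) := by
  set D := v.openUnitDisc
  set A := (QuotientGroup.mk x : PGL2 K) • D ∪ (QuotientGroup.mk x : PGL2 K) ^ 2 • D
  have hAD : Disjoint A D :=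
    Set.disjoint_union_left.2 ⟨disjoint_smul_openUnitDisc hx, disjoint_sq_smul_openUnitDisc hx⟩
  have hyA : (QuotientGroup.mk y : PGL2 K) • A ⊆ D := by
    rw [Set.smul_set_union]
    exact Set.union_subset (smul_smul_openUnitDisc_subset hx ht hy)
      (smul_sq_smul_openUnitDisc_subset hx ht hy)
  have h0 : Projectivization.mk K ![0, 1] (by simp) ∈ D := by
    simp [D, Valuation.mk_mem_openUnitDisc]
  refine Monoid.CoprodI.lift_zmodHom_injective_of_ping_pong hg ![A, D] (.inr ⟨0, le_rfl⟩)
    (Fin.forall_fin_two.2 ⟨⟨_, .inl (Set.smul_mem_smul_set h0)⟩, ⟨_, h0⟩⟩) ?_ ?_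
  · intro i j hij
    fin_cases i <;> fin_cases j
    all_goals first | exact absurd rfl hij | exact hAD | exact hAD.symm
  · intro i j hij k hk0 hkn
    fin_cases i <;> fin_cases j
    all_goals first | exact absurd rfl hij | skip
    · change k < 3 at hkn
      interval_cases k
      · rw [pow_one]
        exact Set.subset_union_left
      · exact Set.subset_union_right
    · change k < 2 at hkn
      interval_cases k
      simpa using hyA

theorem exists_injective_PGL2_of_one_lt_valuation :
    ∃ ι : PresentedGroup xiRels →* PGL2 K,
      ι (PresentedGroup.of 0) = QuotientGroup.mk x ∧
      ι (PresentedGroup.of 1) = QuotientGroup.mk y ∧ Injective ι := by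
  have hx3 := mk_pow_three_eq_one hx
  have hy2 := mk_sq_eq_one (v.ne_zero_iff.1 (zero_lt_one.trans ht).ne') hy
  set g : Fin 2 → PGL2 K := ![QuotientGroup.mk x, QuotientGroup.mk y]
  have hg : ∀ i, g i ^ ![3, 2] i = 1 := Fin.forall_fin_two.2 ⟨hx3, hy2⟩
  have hrels : ∀ r ∈ xiRels, FreeGroup.lift g r = 1 := by
    rintro _ (rfl | rfl) <;> simpa [g]
  refine ⟨PresentedGroup.toGroup hrels, PresentedGroup.toGroup.of hrels,
    PresentedGroup.toGroup.of hrels, ?_⟩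
  exact PresentedGroup.injective_of_injective_lift_zmodHom
    (Fin.forall_fin_two.2 ⟨.inl rfl, .inr rfl⟩) _ hg (fun i => PresentedGroup.toGroup.of hrels)
    (lift_zmodHom_injective_of_one_lt_valuation ht hx hy hg)

end PingPong

theorem xi_to_PGL2_injective_general (p : ℕ) [Fact p.Prime] :
    ∃ ι : PresentedGroup xiRels →* PGL2 (RatFunc (ZMod p)),
      ι (PresentedGroup.of 0) = (QuotientGroup.mk (Xmat p) : PGL2 (RatFunc (ZMod p))) ∧
      ι (PresentedGroup.of 1) = (QuotientGroup.mk (Ymat p) : PGL2 (RatFunc (ZMod p))) ∧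
      Function.Injective ι := by
  classical
  refine exists_injective_PGL2_of_one_lt_valuation (v := RatFunc.inftyValuation (ZMod p))
    (t := RatFunc.X) ?_ rfl rfl
  rw [RatFunc.inftyValuation.X, ← WithZero.exp_zero, WithZero.exp_lt_exp]
  exact one_pos

/-- The homomorphism `Ξ → PGL₂(𝔽_p(t))` (for `p ≥ 3`) sending `x` to the class of
`(0,1;−1,−1)` and `y` to the class of `(0,1;t,0)` exists and is injective. -/
theorem xi_to_PGL2_injective (p : ℕ) [Fact p.Prime] (hp : 3 ≤ p) :
    ∃ ι : PresentedGroup xiRels →* PGL2 (RatFunc (ZMod p)),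
      ι (PresentedGroup.of 0) = (QuotientGroup.mk (Xmat p) : PGL2 (RatFunc (ZMod p))) ∧
      ι (PresentedGroup.of 1) = (QuotientGroup.mk (Ymat p) : PGL2 (RatFunc (ZMod p))) ∧
      Function.Injective ι :=
  xi_to_PGL2_injective_general p
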